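/- arXiv:2605.08100 — 3 statements merged into one kernel-verified Lean document; each statement's English description precedes it below -/
import Mathlib

section
/- (Skew power rule) Let R[x;σ,δ] be an Ore extension with σ an endomorphism and δ a q-skew σ-derivation. Then for all a ∈ R and n ∈ ℕ, xⁿ·a = Σ_{i=0}^{n} [n choose i]_q · σ^i(δ^{n−i}(a)) · x^i in R[x;σ,δ]. -/
/-!
Write `x^n a = Σ_i c(n,i) x^i`. Moving one more `x` past each coefficient with
`x r = σ(r) x + δ(r)` gives the Pascal-type recursion `c(n+1,i+1) = σ(c(n,i)) + δ(c(n,i+1))`,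
`c(n+1,0) = δ(c(n,0))`. The coefficients `[n choose i]_q σ^i δ^(n-i) a` satisfy it: pushing `δ`
past `σ^(i+1)` costs `q^(i+1)` by the q-commutation rule, which is exactly the weight in the
q-Pascal rule.
-/

/-- The Gaussian (q-)binomial coefficient `[n choose i]_q`. -/
def qBinom {k : Type*} [Field k] (q : k) : ℕ → ℕ → k
  | _, 0 => 1
  | 0, _ + 1 => 0
  | n + 1, i + 1 => qBinom q n i + q ^ (i + 1) * qBinom q n (i + 1)

open Finset

section SkewCoefficients

variable {k : Type*} [Field k]

lemma qBinom_zero_right (q : k) (n : ℕ) : qBinom q n 0 = 1 := by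
  cases n <;> rfl

lemma qBinom_succ_succ (q : k) (n i : ℕ) :
    qBinom q (n + 1) (i + 1) = qBinom q n i + q ^ (i + 1) * qBinom q n (i + 1) :=
  rfl

lemma qBinom_eq_zero_of_lt (q : k) : ∀ {n i : ℕ}, n < i → qBinom q n i = 0
  | 0, _ + 1, _ => rfl
  | n + 1, i + 1, h => by
    rw [qBinom_succ_succ, qBinom_eq_zero_of_lt q (by omega : n < i),
      qBinom_eq_zero_of_lt q (by omega : n < i + 1)]
    ring

variable {M : Type*} [AddCommGroup M] [Module k M]

lemma LinearMap.apply_iterate_of_q_commute {σ δ : M →ₗ[k] M} {q : k}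
    (hq : ∀ m, q • σ (δ m) = δ (σ m)) (i : ℕ) (m : M) :
    δ (σ^[i] m) = q ^ i • σ^[i] (δ m) := by
  induction i with
  | zero => simp
  | succ i ih =>
    rw [Function.iterate_succ_apply', ← hq, ih, map_smul, smul_smul, pow_succ',
      ← Function.iterate_succ_apply' σ]

/-- The coefficient of `x^i` in `x^n m`. -/
def skewCoeff (σ δ : M →ₗ[k] M) (q : k) (n i : ℕ) (m : M) : M :=
  qBinom q n i • σ^[i] (δ^[n - i] m)

variable (σ δ : M →ₗ[k] M) (q : k)

lemma skewCoeff_zero_zero (m : M) : skewCoeff σ δ q 0 0 m = m := by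
  simp [skewCoeff, qBinom_zero_right]

lemma skewCoeff_succ_zero (n : ℕ) (m : M) :
    skewCoeff σ δ q (n + 1) 0 m = δ (skewCoeff σ δ q n 0 m) := by
  simp only [skewCoeff, qBinom_zero_right, one_smul, Function.iterate_zero, id_eq, Nat.sub_zero,
    Function.iterate_succ_apply']

lemma skewCoeff_of_lt {n i : ℕ} (h : n < i) (m : M) : skewCoeff σ δ q n i m = 0 := by
  simp [skewCoeff, qBinom_eq_zero_of_lt q h]

variable {σ δ q} in
lemma skewCoeff_succ_succ (hq : ∀ m, q • σ (δ m) = δ (σ m)) (n i : ℕ) (m : M) :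
    skewCoeff σ δ q (n + 1) (i + 1) m =
      σ (skewCoeff σ δ q n i m) + δ (skewCoeff σ δ q n (i + 1) m) := by
  rcases lt_or_ge i n with h | h
  · obtain ⟨j, rfl⟩ : ∃ j, n = i + 1 + j := ⟨n - (i + 1), by omega⟩
    have hsub : i + 1 + j - i = j + 1 := by omega
    simp only [skewCoeff, qBinom_succ_succ, map_smul, LinearMap.apply_iterate_of_q_commute hq,
      ← Function.iterate_succ_apply' σ, ← Function.iterate_succ_apply' δ, hsub,
      Nat.add_sub_cancel_left, Nat.add_sub_add_right]
    module
  · rw [skewCoeff_of_lt σ δ q (by omega : n < i + 1), map_zero, add_zero]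
    simp only [skewCoeff, qBinom_succ_succ, qBinom_eq_zero_of_lt q (by omega : n < i + 1),
      mul_zero, add_zero, map_smul, Nat.add_sub_add_right, ← Function.iterate_succ_apply' σ]

end SkewCoefficients

lemma mul_sum_range_of_mul_eq_add {R S F : Type*} [Ring R] [Ring S] [FunLike F R S]
    [AddMonoidHomClass F R S] {φ : F} {σ δ : R → R} {X : S}
    (hrel : ∀ r, X * φ r = φ (σ r) * X + φ (δ r)) (c : ℕ → R) {n : ℕ}
    (hc : δ (c (n + 1)) = 0) :
    X * ∑ i ∈ range (n + 1), φ (c i) * X ^ i =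
      ∑ i ∈ range (n + 1), φ (σ (c i) + δ (c (i + 1))) * X ^ (i + 1) + φ (δ (c 0)) := by
  calc X * ∑ i ∈ range (n + 1), φ (c i) * X ^ i
      = ∑ i ∈ range (n + 1), (φ (σ (c i)) * X ^ (i + 1) + φ (δ (c i)) * X ^ i) := by
        rw [mul_sum]
        refine sum_congr rfl fun i _ ↦ ?_
        rw [← mul_assoc, hrel, add_mul, mul_assoc, ← pow_succ']
    _ = ∑ i ∈ range (n + 1), φ (σ (c i)) * X ^ (i + 1) +
          (∑ i ∈ range (n + 1), φ (δ (c (i + 1))) * X ^ (i + 1) + φ (δ (c 0))) := by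
        rw [sum_add_distrib, sum_range_succ' (fun i ↦ φ (δ (c i)) * X ^ i),
          sum_range_succ (fun i ↦ φ (δ (c (i + 1))) * X ^ (i + 1)), hc, map_zero, zero_mul,
          add_zero, pow_zero, mul_one]
    _ = _ := by
        simp only [← add_assoc, ← sum_add_distrib, map_add, add_mul]

theorem ore_skew_power_rule_general {k : Type*} [Field k] {R : Type*} [Ring R] [Algebra k R]
    (σ : R →ₐ[k] R) (δ : R →ₗ[k] R)
    (q : k)
    (hq : ∀ a : R, q • σ (δ a) = δ (σ a))
    {S : Type*} [Ring S] [Algebra k S] (φ : R →ₐ[k] S)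
    (X : S)
    (hrel : ∀ r : R, X * φ r = φ (σ r) * X + φ (δ r)) :
    ∀ (a : R) (n : ℕ),
      X ^ n * φ a =
        ∑ i ∈ Finset.range (n + 1),
          φ (qBinom q n i • (⇑σ)^[i] ((⇑δ)^[n - i] a)) * X ^ i := by
  intro a n
  change X ^ n * φ a = ∑ i ∈ range (n + 1), φ (skewCoeff σ.toLinearMap δ q n i a) * X ^ i
  induction n with
  | zero => simp [skewCoeff_zero_zero]
  | succ n ih =>
    calc X ^ (n + 1) * φ a
        = X * ∑ i ∈ range (n + 1), φ (skewCoeff σ.toLinearMap δ q n i a) * X ^ i := by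
          rw [pow_succ', mul_assoc, ih]
      _ = _ := by
        rw [mul_sum_range_of_mul_eq_add hrel _ (by rw [skewCoeff_of_lt _ _ _ (by omega), map_zero]),
          sum_range_succ' _ (n + 1), skewCoeff_succ_zero, pow_zero, mul_one]
        simp only [skewCoeff_succ_succ (σ := σ.toLinearMap) hq, AlgHom.toLinearMap_apply]

/-- Skew power rule in an Ore extension `R[x;σ,δ]` (here realized as a ring `S`
which is free as a left `R`-module with basis the powers of `X`, with
`X·r = σ(r)·X + δ(r)`): `xⁿ·a = Σ_{i=0}^{n} [n choose i]_q • σ^i(δ^{n−i} a) · x^i`. -/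
theorem ore_skew_power_rule {k : Type*} [Field k] {R : Type*} [Ring R] [Algebra k R]
    (σ : R →ₐ[k] R) (δ : R →ₗ[k] R)
    (hleib : ∀ a b : R, δ (a * b) = σ a * δ b + δ a * b)
    (q : k) (hq0 : q ≠ 0)
    (hq : ∀ a : R, q • σ (δ a) = δ (σ a))
    {S : Type*} [Ring S] [Algebra k S] (φ : R →ₐ[k] S) (hφ : Function.Injective φ)
    (X : S)
    (hbasis : ∀ s : S, ∃! p : ℕ →₀ R, s = ∑ i ∈ p.support, φ (p i) * X ^ i)
    (hrel : ∀ r : R, X * φ r = φ (σ r) * X + φ (δ r)) :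
    ∀ (a : R) (n : ℕ),
      X ^ n * φ a =
        ∑ i ∈ Finset.range (n + 1),
          φ (qBinom q n i • (⇑σ)^[i] ((⇑δ)^[n - i] a)) * X ^ i :=
  ore_skew_power_rule_general σ δ q hq φ X hrel
end

section
/- Let δ be a locally nilpotent q-skew σ-derivation on a k-algebra R, a ∈ R with N = nildeg(a), and n > N. Define F_i(a) = [n choose i]_q σ^i(δ^{n−i}(a)) for 0 ≤ i ≤ n. Then for any m ≥ 1 and any indices i_1,…,i_{m−1} ∈ {0,…,n}, the nilpotency degree of a·F_{i_{m−1}}(a·F_{i_{m−2}}(⋯a·F_{i_1}(a)⋯)) is at most m·N − (m−1)·n + Σ_{k=1}^{m−1} i_k (whenever this quantity is nonnegative; if it is negative the element is zero). -/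
/-- The nested product `a·F_{i_{m−1}}(a·F_{i_{m−2}}(⋯ a·F_{i_1}(a)⋯))`. -/
def nestProd {R : Type*} [Ring R] (a : R) (F : ℕ → R → R) : List ℕ → R
  | [] => a
  | i :: t => a * F i (nestProd a F t)

/-- The nilpotency degree: the least `N` with `δ^[N] a = 0`. -/
noncomputable def nildeg {R : Type*} [Ring R] (δ : R → R) (a : R) : ℕ :=
  sInf {N : ℕ | δ^[N] a = 0}

section SkewDerivation

variable {k R : Type*} [CommSemiring k] [Semiring R] [Algebra k R]
variable (σ : R ≃ₐ[k] R) (δ : R →ₗ[k] R) {q : k}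

theorem iterate_eq_zero_of_le {A B : ℕ} {z : R} (hz : (⇑δ)^[A] z = 0) (hAB : A ≤ B) :
    (⇑δ)^[B] z = 0 := by
  rw [← Nat.sub_add_cancel hAB, Function.iterate_add_apply, hz, iterate_map_zero]

theorem iterate_smul_eq_zero {j : ℕ} {z : R} (hz : (⇑δ)^[j] z = 0) (c : k) :
    (⇑δ)^[j] (c • z) = 0 := by
  rw [← Module.End.pow_apply, map_smul, Module.End.pow_apply, hz, smul_zero]

theorem iterate_apply_map_eq_pow_smul (hq : ∀ x, q • σ (δ x) = δ (σ x)) (j : ℕ) (x : R) :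
    (⇑δ)^[j] (σ x) = q ^ j • σ ((⇑δ)^[j] x) := by
  induction j with
  | zero => simp
  | succ j ih =>
    rw [Function.iterate_succ_apply', ih, map_smul, ← hq, smul_smul, ← pow_succ,
      Function.iterate_succ_apply']

theorem iterate_apply_iterate_map_eq_zero (hq : ∀ x, q • σ (δ x) = δ (σ x)) {j : ℕ} {x : R}
    (hx : (⇑δ)^[j] x = 0) (i : ℕ) : (⇑δ)^[j] ((⇑σ)^[i] x) = 0 := by
  induction i with
  | zero => exact hx
  | succ i ih =>
    rw [Function.iterate_succ_apply', iterate_apply_map_eq_pow_smul σ δ hq, ih, map_zero,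
      smul_zero]

theorem iterate_mul_eq_zero (hq : ∀ x, q • σ (δ x) = δ (σ x))
    (hleib : ∀ x y, δ (x * y) = σ x * δ y + δ x * y) {A B : ℕ} {x y : R}
    (hx : (⇑δ)^[A + 1] x = 0) (hy : (⇑δ)^[B + 1] y = 0) : (⇑δ)^[A + B + 1] (x * y) = 0 := by
  generalize hs : A + B = s
  induction s using Nat.strong_induction_on generalizing A B x y with
  | _ s ih =>
  have hσx : (⇑δ)^[A + 1] (σ x) = 0 := by
    rw [iterate_apply_map_eq_pow_smul σ δ hq, hx, map_zero, smul_zero]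
  rw [Function.iterate_succ_apply] at hx hy
  have hσxδy : (⇑δ)^[s] (σ x * δ y) = 0 := by
    obtain _ | B := B
    · rw [Function.iterate_zero_apply] at hy
      rw [hy, mul_zero, iterate_map_zero]
    · rw [← hs, ← add_assoc]
      exact ih (A + B) (by omega) hσx hy rfl
  have hδxy : (⇑δ)^[s] (δ x * y) = 0 := by
    obtain _ | A := A
    · rw [Function.iterate_zero_apply] at hx
      rw [hx, zero_mul, iterate_map_zero]
    · rw [← hs, Nat.add_right_comm]
      exact ih (A + B) (by omega) hx (by rwa [Function.iterate_succ_apply]) rfl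
  rw [Function.iterate_succ_apply, hleib, iterate_map_add, hσxδy, hδxy, add_zero]

theorem iterate_toNat_mul_eq_zero (hq : ∀ x, q • σ (δ x) = δ (σ x))
    (hleib : ∀ x y, δ (x * y) = σ x * δ y + δ x * y) {A B : ℤ} {x y : R}
    (hx : (⇑δ)^[A.toNat] x = 0) (hy : (⇑δ)^[B.toNat] y = 0) :
    (⇑δ)^[(A + B - 1).toNat] (x * y) = 0 := by
  rcases hA : A.toNat with _ | A'
  · rw [hA, Function.iterate_zero_apply] at hx
    rw [hx, zero_mul, iterate_map_zero]
  rcases hB : B.toNat with _ | B'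
  · rw [hB, Function.iterate_zero_apply] at hy
    rw [hy, mul_zero, iterate_map_zero]
  rw [hA] at hx
  rw [hB] at hy
  rw [show (A + B - 1).toNat = A' + B' + 1 by omega]
  exact iterate_mul_eq_zero σ δ hq hleib hx hy

end SkewDerivation

theorem iterate_toNat_nestProd_eq_zero {k R : Type*} [CommSemiring k] [Ring R] [Algebra k R]
    (σ : R ≃ₐ[k] R) (δ : R →ₗ[k] R) {q : k} (hq : ∀ x, q • σ (δ x) = δ (σ x))
    (hleib : ∀ x y, δ (x * y) = σ x * δ y + δ x * y) (c : ℕ → k) {a : R} {N : ℕ}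
    (ha : (⇑δ)^[N] a = 0) (n : ℕ) (t : List ℕ) :
    (⇑δ)^[(((t.length : ℤ) + 1) * N - t.length * n + (t.map ((↑) : ℕ → ℤ)).sum).toNat]
      (nestProd a (fun i b => c i • (⇑σ)^[i] ((⇑δ)^[n - i] b)) t) = 0 := by
  induction t with
  | nil => simpa [nestProd] using ha
  | cons i t ih =>
    set P := nestProd a (fun i b => c i • (⇑σ)^[i] ((⇑δ)^[n - i] b)) t
    set Q : ℤ := ((t.length : ℤ) + 1) * N - t.length * n + (t.map ((↑) : ℕ → ℤ)).sum
    have hF : (⇑δ)^[(Q - (n - i : ℕ)).toNat] (c i • (⇑σ)^[i] ((⇑δ)^[n - i] P)) = 0 := by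
      refine iterate_smul_eq_zero δ (iterate_apply_iterate_map_eq_zero σ δ hq ?_ i) (c i)
      rw [← Function.iterate_add_apply]
      exact iterate_eq_zero_of_le δ ih (by omega)
    have ha' : (⇑δ)^[(N : ℤ).toNat] a = 0 := by rwa [Int.toNat_natCast]
    refine iterate_eq_zero_of_le δ (iterate_toNat_mul_eq_zero σ δ hq hleib ha' hF)
      (Int.toNat_le_toNat ?_)
    have hni : (n : ℤ) - i ≤ ((n - i : ℕ) : ℤ) := by omega
    simp only [Q, List.length_cons, List.map_cons, List.sum_cons]
    push_cast
    linarith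

theorem nildeg_nestProd_bound_general {k : Type*} [Field k] {R : Type*} [Ring R] [Algebra k R]
    (σ : R ≃ₐ[k] R) (δ : R →ₗ[k] R)
    (hleib : ∀ a b : R, δ (a * b) = σ a * δ b + δ a * b)
    (q : k)
    (hq : ∀ a : R, q • σ (δ a) = δ (σ a))
    (hln : ∀ a : R, ∃ n : ℕ, (⇑δ)^[n] a = 0)
    (a : R) (N : ℕ) (hN : N = nildeg (⇑δ) a) (n : ℕ)
    (m : ℕ) (hm : 1 ≤ m) (ι : Fin (m - 1) → Fin (n + 1)) :
    let elem := nestProd a (fun i b => qBinom q n i • (⇑σ)^[i] ((⇑δ)^[n - i] b))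
      (List.ofFn (fun j => (ι j : ℕ)))
    let Q : ℤ := (m : ℤ) * N - ((m : ℤ) - 1) * n + ∑ j, ((ι j : ℕ) : ℤ)
    (0 ≤ Q → (nildeg (⇑δ) elem : ℤ) ≤ Q) ∧ (Q < 0 → elem = 0) := by
  intro elem Q
  have ha : (⇑δ)^[N] a = 0 := hN ▸ Nat.sInf_mem (hln a)
  have hQ : (⇑δ)^[Q.toNat] elem = 0 := by
    have h := iterate_toNat_nestProd_eq_zero σ δ hq hleib (qBinom q n) ha n
      (List.ofFn (fun j => (ι j : ℕ)))
    rwa [List.length_ofFn, List.map_ofFn, List.sum_ofFn, Nat.cast_pred hm, sub_add_cancel] at h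
  refine ⟨fun hQ0 => ?_, fun hQ0 => ?_⟩
  · have : nildeg (⇑δ) elem ≤ Q.toNat := Nat.sInf_le hQ
    omega
  · rwa [Int.toNat_of_nonpos hQ0.le, Function.iterate_zero_apply] at hQ

/-- Nilpotency-degree bound for iterated products: with `N = nildeg a` and `n > N`,
the nilpotency degree of `a·F_{i_{m−1}}(⋯ a·F_{i_1}(a)⋯)` is at most
`m·N − (m−1)·n + Σ i_k` when this is nonnegative; when it is negative the element is `0`. -/
theorem nildeg_nestProd_bound {k : Type*} [Field k] {R : Type*} [Ring R] [Algebra k R]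
    (σ : R ≃ₐ[k] R) (δ : R →ₗ[k] R)
    (hleib : ∀ a b : R, δ (a * b) = σ a * δ b + δ a * b)
    (q : k) (hq0 : q ≠ 0)
    (hq : ∀ a : R, q • σ (δ a) = δ (σ a))
    (hln : ∀ a : R, ∃ n : ℕ, (⇑δ)^[n] a = 0)
    (a : R) (N : ℕ) (hN : N = nildeg (⇑δ) a) (n : ℕ) (hn : N < n)
    (m : ℕ) (hm : 1 ≤ m) (ι : Fin (m - 1) → Fin (n + 1)) :
    let elem := nestProd a (fun i b => qBinom q n i • (⇑σ)^[i] ((⇑δ)^[n - i] b))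
      (List.ofFn (fun j => (ι j : ℕ)))
    let Q : ℤ := (m : ℤ) * N - ((m : ℤ) - 1) * n + ∑ j, ((ι j : ℕ) : ℤ)
    (0 ≤ Q → (nildeg (⇑δ) elem : ℤ) ≤ Q) ∧ (Q < 0 → elem = 0) :=
  nildeg_nestProd_bound_general σ δ hleib q hq hln a N hN n m hm ι
end

section
/- (Well-definedness of Ore power series) Let R be a ring, σ an endomorphism of R, and δ a locally nilpotent σ-derivation. Then the multiplication on R[x;σ,δ] extends to a well-defined associative multiplication on the power series module R[[x;σ,δ]]: for power series f = Σ a_i x^i and g = Σ b_j x^j, each coefficient of f·g (computed via xⁿ·b = Σ_i c_{n,i}(b) x^i with c_{n,i} sums of compositions of σ and δ) is a finite sum. -/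
/-- The coefficient maps `c_{n,i}` determined by `xⁿ·b = Σ_i c_{n,i}(b)·x^i` in an
Ore extension with `x·r = σ(r)·x + δ(r)`: they satisfy
`c_{0,0} = id`, `c_{0,i+1} = 0`, `c_{n+1,0} = δ ∘ c_{n,0}`, and
`c_{n+1,i+1} = σ ∘ c_{n,i} + δ ∘ c_{n,i+1}`; each `c_{n,i}` is a sum of
compositions of `σ` and `δ`. -/
def oreCoeff {R : Type*} [Ring R] (σ : R →+* R) (δ : R →+ R) : ℕ → ℕ → R → R
  | 0, 0, b => b
  | 0, _ + 1, _ => 0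
  | n + 1, 0, b => δ (oreCoeff σ δ n 0 b)
  | n + 1, i + 1, b => σ (oreCoeff σ δ n i b) + δ (oreCoeff σ δ n (i + 1) b)

/-! For fixed `i` and `b`, the recursion `c_{n+1,i+1} = σ c_{n,i} + δ c_{n,i+1}` shows by
induction on `i` that `n ↦ c_{n,i}(b)` eventually vanishes: once `c_{n,i}(b) = 0` for all
`n ≥ N`, the sequence `c_{n,i+1}(b)` is just `δ` iterated from `c_{N,i+1}(b)` on, and local
nilpotence of `δ` kills it. -/

open Filter

theorem eventually_eq_zero_of_eventually_succ_eq {M : Type*} [Zero M] {δ : M → M}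
    (hδ : δ 0 = 0) (hln : ∀ a : M, ∃ n : ℕ, δ^[n] a = 0) {f : ℕ → M}
    (hf : ∀ᶠ n in atTop, f (n + 1) = δ (f n)) : ∀ᶠ n in atTop, f n = 0 := by
  obtain ⟨N, hN⟩ := eventually_atTop.mp hf
  have hiter : ∀ k, f (N + k) = δ^[k] (f N) := by
    intro k
    induction k with
    | zero => rfl
    | succ k ih => rw [← Nat.add_assoc, hN _ (Nat.le_add_right N k), ih,
        Function.iterate_succ_apply']
  obtain ⟨m, hm⟩ := hln (f N)
  rw [eventually_atTop]
  refine ⟨N + m, fun n hn => ?_⟩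
  obtain ⟨j, rfl⟩ := Nat.exists_eq_add_of_le hn
  rw [Nat.add_assoc, hiter, Nat.add_comm m j, Function.iterate_add_apply, hm,
    Function.iterate_fixed hδ]

theorem oreCoeff_eventually_eq_zero {R : Type*} [Ring R] (σ : R →+* R) (δ : R →+ R)
    (hln : ∀ a : R, ∃ n : ℕ, (⇑δ)^[n] a = 0) (i : ℕ) (b : R) :
    ∀ᶠ n in atTop, oreCoeff σ δ n i b = 0 := by
  induction i with
  | zero =>
    exact eventually_eq_zero_of_eventually_succ_eq (map_zero δ) hln (.of_forall fun _ => rfl)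
  | succ i ih =>
    refine eventually_eq_zero_of_eventually_succ_eq (map_zero δ) hln ?_
    filter_upwards [ih] with n hn
    change σ (oreCoeff σ δ n i b) + δ (oreCoeff σ δ n (i + 1) b) = _
    rw [hn, map_zero, zero_add]

theorem ore_power_series_well_defined_general {R : Type*} [Ring R]
    (σ : R →+* R) (δ : R →+ R)
    (hln : ∀ a : R, ∃ n : ℕ, (⇑δ)^[n] a = 0) :
    ∀ (b : R) (i : ℕ), {n : ℕ | oreCoeff σ δ n i b ≠ 0}.Finite := by
  intro b i
  have h := oreCoeff_eventually_eq_zero σ δ hln i b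
  rw [← Nat.cofinite_eq_atTop] at h
  exact eventually_cofinite.mp h

/-- Well-definedness of Ore power series: if `δ` is a locally nilpotent
`σ`-derivation, then each coefficient of a product of power series in
`R[[x;σ,δ]]` is a finite sum, i.e. for each `b ∈ R` and each target degree `i`,
only finitely many `n` contribute a nonzero `c_{n,i}(b)`. -/
theorem ore_power_series_well_defined {R : Type*} [Ring R]
    (σ : R →+* R) (δ : R →+ R)
    (hleib : ∀ a b : R, δ (a * b) = σ a * δ b + δ a * b)
    (hln : ∀ a : R, ∃ n : ℕ, (⇑δ)^[n] a = 0) :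
    ∀ (b : R) (i : ℕ), {n : ℕ | oreCoeff σ δ n i b ≠ 0}.Finite :=
  ore_power_series_well_defined_general σ δ hln
end
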